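/- Let K be a positive integer and γ > 0. Then the average over the main lobe of the reciprocal interference factor satisfies (K/4)·∫_{−2/K}^{2/K} (1 + (γ/K)·(K − K³u²/4))^{−1} du = arctanh(√(γ/(1+γ))) / √(γ(1+γ)). (This is the expectation over a uniformly distributed main-lobe angle appearing in the proof of Lemma 1.) -/

import Mathlib

/-!
Completing the square, the denominator is `(1 + γ) - (√γ K u / 2)²`. The substitution
`x = √γ K u / 2` maps the main lobe onto `[-√γ, √γ]`, and `x ↦ arctanh (x / s) / s` is an
antiderivative of `(s² - x²)⁻¹`; oddness of `arctanh` then gives `2 arctanh (√γ / s) / s`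
with `s = √(1 + γ)`.
-/

open Real intervalIntegral

noncomputable def arctanh (x : ℝ) : ℝ := (1 / 2) * Real.log ((1 + x) / (1 - x))

theorem arctanh_neg (x : ℝ) : arctanh (-x) = -arctanh x := by
  rw [arctanh, arctanh, ← sub_eq_add_neg, sub_neg_eq_add, ← inv_div (1 + x), Real.log_inv,
    mul_neg]

theorem hasDerivAt_arctanh {x : ℝ} (h₁ : 1 + x ≠ 0) (h₂ : 1 - x ≠ 0) :
    HasDerivAt arctanh (1 - x ^ 2)⁻¹ x := by
  have hquot : HasDerivAt (fun y => (1 + y) / (1 - y)) (2 / (1 - x) ^ 2) x :=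
    (((hasDerivAt_id x).const_add 1).div ((hasDerivAt_id x).const_sub 1) h₂).congr_deriv
      (by simp only [id]; ring)
  refine ((hquot.log (div_ne_zero h₁ h₂)).const_mul (1 / 2)).congr_deriv ?_
  rw [show 1 - x ^ 2 = (1 + x) * (1 - x) by ring]
  field_simp

theorem integral_inv_sq_sub_sq {s a b : ℝ} (ha : |a| < s) (hb : |b| < s) :
    ∫ x in a..b, (s ^ 2 - x ^ 2)⁻¹ = (arctanh (b / s) - arctanh (a / s)) / s := by
  have hs : 0 < s := (abs_nonneg a).trans_lt ha
  have hsub : Set.uIcc a b ⊆ Set.Ioo (-s) s :=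
    Set.ordConnected_Ioo.uIcc_subset (abs_lt.mp ha) (abs_lt.mp hb)
  have hne : ∀ x ∈ Set.uIcc a b, s ^ 2 - x ^ 2 ≠ 0 := fun x hx => by
    obtain ⟨hlo, hhi⟩ := hsub hx
    nlinarith
  have hderiv : ∀ x ∈ Set.uIcc a b,
      HasDerivAt (fun y => arctanh (y / s) / s) (s ^ 2 - x ^ 2)⁻¹ x := by
    intro x hx
    obtain ⟨hlo, hhi⟩ := hsub hx
    have h₁ : 1 + x / s ≠ 0 := by
      rw [one_add_div hs.ne']; exact div_ne_zero (by linarith) hs.ne'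
    have h₂ : 1 - x / s ≠ 0 := by
      rw [one_sub_div hs.ne']; exact div_ne_zero (by linarith) hs.ne'
    refine (((hasDerivAt_arctanh h₁ h₂).comp x ((hasDerivAt_id x).div_const s)).div_const
      s).congr_deriv ?_
    have := hne x hx
    rw [div_pow, ← div_self (pow_ne_zero 2 hs.ne'), ← sub_div]
    field_simp
  have hcont : ContinuousOn (fun x => (s ^ 2 - x ^ 2)⁻¹) (Set.uIcc a b) :=
    ContinuousOn.inv₀ (by fun_prop) hne
  rw [integral_eq_sub_of_hasDerivAt hderiv hcont.intervalIntegrable, sub_div]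

/-- The average over the main lobe of the reciprocal interference factor:
for a positive integer `K` and `γ > 0`,
`(K/4) ∫_{-2/K}^{2/K} (1 + (γ/K)(K - K³u²/4))⁻¹ du
  = arctanh(√(γ/(1+γ))) / √(γ(1+γ))`. -/
theorem main_lobe_average_reciprocal_interference
    (K : ℕ) (hK : 0 < K) (γ : ℝ) (hγ : 0 < γ) :
    ((K : ℝ) / 4) * ∫ u in (-(2 / (K : ℝ)))..(2 / (K : ℝ)),
        (1 + (γ / K) * ((K : ℝ) - (K : ℝ) ^ 3 * u ^ 2 / 4))⁻¹
      = arctanh (Real.sqrt (γ / (1 + γ))) / Real.sqrt (γ * (1 + γ)) := by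
  have hK' : (0 : ℝ) < K := Nat.cast_pos.mpr hK
  have ht : 0 < √γ := Real.sqrt_pos.mpr hγ
  have hts : √γ < √(1 + γ) := Real.sqrt_lt_sqrt hγ.le (by linarith)
  have hc : √γ * K / 2 ≠ 0 := by positivity
  have hintegrand (u : ℝ) : 1 + (γ / K) * ((K : ℝ) - (K : ℝ) ^ 3 * u ^ 2 / 4)
      = √(1 + γ) ^ 2 - (√γ * K / 2 * u) ^ 2 := by
    rw [Real.sq_sqrt (by linarith), mul_pow, div_pow, mul_pow, Real.sq_sqrt hγ.le]
    field_simp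
    ring
  have hbound : √γ * K / 2 * (2 / K) = √γ := by field_simp
  simp_rw [hintegrand]
  rw [integral_comp_mul_left (fun x => (√(1 + γ) ^ 2 - x ^ 2)⁻¹) hc, mul_neg, hbound,
    integral_inv_sq_sub_sq (by rwa [abs_neg, abs_of_pos ht]) (by rwa [abs_of_pos ht]),
    neg_div, arctanh_neg, Real.sqrt_div hγ.le, Real.sqrt_mul hγ.le, smul_eq_mul]
  field_simp
  ring
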